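/- arXiv:1012.5117 — 3 statements merged into one kernel-verified Lean document; each statement's English description precedes it below -/
import Mathlib

section
/- Let G be a finite connected graph in which the induced subgraph on a vertex set A is connected with girth greater than 2s for some s ≥ 4. Then the tree excess of A satisfies tx(A) ≤ |A|²/(s/2 - 1)². -/
/-!
Deleting a vertex of degree one keeps `|E| - |A|` and lowers `|A|`, so by induction we may assume
minimum degree at least `2`. Let `t = ⌊s/2⌋ - 1`. Since the girth exceeds `4t + 4`, every ball
`B(v, ρ)` with `ρ ≤ 2t + 1` induces a tree. Comparing the edge counts of the trees on `B(v, ρ)`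
and `B(v, ρ + 1)` shows that the second ball has at least `2 + ∑_{u ∈ B(v, ρ)} (deg u - 2)` more
vertices. Hence `|B(v, t)| ≥ 2t + 1` and `(t + 1) ∑_{u ∈ B(v, t)} (deg u - 2) ≤ |A|`. Summing over `v` and
swapping the sums gives `(t + 1)(2t + 1) · 2(|E| - |A|) ≤ |A|²`.
-/

open Finset SimpleGraph

lemma add_one_le_div_sq_of_mul_le {k n t τ : ℝ} (hτ : 0 < τ) (hτt : 2 * τ ≤ 2 * t + 1)
    (hk : 0 ≤ k) (hn : 2 * t + 1 ≤ n)
    (hkn : (t + 1) * (2 * t + 1) * (2 * k) ≤ n ^ 2) : k + 1 ≤ n ^ 2 / τ ^ 2 := by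
  rw [le_div_iff₀ (by positivity)]
  have hτ2 : 4 * τ ^ 2 ≤ (2 * t + 1) ^ 2 := by nlinarith
  nlinarith

namespace SimpleGraph

variable {V : Type*} {G : SimpleGraph V} {u v x y z : V}

lemma Walk.notMem_support_of_length_eq_dist {p : G.Walk v y} (hp : p.length = G.dist v y)
    (hxy : x ≠ y) (h : G.dist v y ≤ G.dist v x) : x ∉ p.support := by
  classical
  intro hx
  have hsplit := congrArg Walk.length (p.take_spec hx)
  have hdrop : (p.dropUntil x hx).length ≠ 0 := fun h0 => hxy (Walk.eq_of_length_eq_zero h0)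
  have := G.dist_le (p.takeUntil x hx)
  rw [Walk.length_append] at hsplit
  omega

lemma Walk.dist_le_of_mem_support_of_length_eq_dist {p : G.Walk v y}
    (hp : p.length = G.dist v y) (hx : x ∈ p.support) : G.dist v x ≤ G.dist v y :=
  by classical exact hp ▸ (G.dist_le _).trans (p.length_takeUntil_le_length hx)

lemma exists_isCycle_length_le_of_adj_of_adj (hxy : G.Adj x y) (hxz : G.Adj x z) (hyz : y ≠ z)
    (p : G.Walk y z) (hx : x ∉ p.support) :
    ∃ c : G.Walk x x, c.IsCycle ∧ c.length ≤ p.length + 2 := by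
  classical
  have hxq : x ∉ p.bypass.support := fun h => hx (p.support_bypass_subset_support h)
  refine ⟨.cons hxy (p.bypass.concat hxz.symm), ?_, ?_⟩
  · refine Path.cons_isCycle ⟨_, p.bypass_isPath.concat hxq hxz.symm⟩ hxy ?_
    simp only [Walk.edges_concat, List.concat_eq_append, List.mem_append, List.mem_singleton,
      not_or]
    exact ⟨fun h => hxq (p.bypass.fst_mem_support_of_mem_edges h), by simp [hyz, hxy.ne']⟩
  · simpa using p.length_bypass_le_length

theorem Connected.isAcyclic_of_forall_dist_le {r : ℕ} (hG : G.Connected)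
    (hr : ∀ u, G.dist v u ≤ r) (hg : ((2 * r + 2 : ℕ) : ℕ∞) < G.egirth) : G.IsAcyclic := by
  classical
  -- A vertex `x` of the cycle farthest from `v` has two cycle neighbours whose shortest paths
  -- from `v` avoid `x`. Joined through `x`, they close a cycle of length at most `2r + 2`.
  intro w c hc
  obtain ⟨x, hx, hmax⟩ := c.support.toFinset.exists_max_image (G.dist v) ⟨w, by simp⟩
  rw [List.mem_toFinset] at hx
  set c' := c.rotate x hx
  have hc' : c'.IsCycle := hc.rotate hx
  have hnil : ¬ c'.Nil := hc'.not_nil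
  have hle : ∀ i, G.dist v (c'.getVert i) ≤ G.dist v x := fun i =>
    hmax _ (List.mem_toFinset.mpr ((c.mem_support_rotate_iff x hx).mp (c'.getVert_mem_support i)))
  obtain ⟨py, hpy⟩ := hG.exists_walk_length_eq_dist v c'.snd
  obtain ⟨pz, hpz⟩ := hG.exists_walk_length_eq_dist v c'.penultimate
  have hxy : G.Adj x c'.snd := c'.adj_snd hnil
  have hxz : G.Adj x c'.penultimate := (c'.adj_penultimate hnil).symm
  have hxp : x ∉ (py.reverse.append pz).support := by
    simp only [Walk.mem_support_append_iff, Walk.support_reverse, List.mem_reverse, not_or]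
    exact ⟨Walk.notMem_support_of_length_eq_dist hpy hxy.ne (hle 1),
      Walk.notMem_support_of_length_eq_dist hpz hxz.ne (hle _)⟩
  obtain ⟨d, hd, hdlen⟩ :=
    exists_isCycle_length_le_of_adj_of_adj hxy hxz hc'.snd_ne_penultimate _ hxp
  have hy : G.dist v c'.snd ≤ G.dist v x := hle 1
  have hz : G.dist v c'.penultimate ≤ G.dist v x := hle _
  have hgd : 2 * r + 2 < d.length := by exact_mod_cast hg.trans_le (egirth_le_length hd)
  have := hr x
  simp only [Walk.length_append, Walk.length_reverse] at hdlen
  omega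

lemma card_filter_mem_le_of_mem_edgeSet [DecidableEq V] {U W : Finset V} (hUW : U ⊆ W)
    (hN : ∀ u ∈ U, ∀ w, G.Adj u w → w ∈ W) {e : Sym2 V} (he : e ∈ G.edgeSet) :
    #{u ∈ U | u ∈ e} ≤ (if e ∈ U.sym2 then 1 else 0) + (if e ∈ W.sym2 then 1 else 0) := by
  induction e using Sym2.ind with
  | _ a b =>
    have hsplit : {u ∈ U | u ∈ s(a, b)} = {u ∈ U | u = a} ∪ {u ∈ U | u = b} := by
      ext; simp [and_or_left]
    rw [hsplit, filter_eq', filter_eq']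
    have hab : G.Adj a b := he
    by_cases ha : a ∈ U <;> by_cases hb : b ∈ U
    · simp [ha, hb, hUW ha, hUW hb, card_le_two]
    · simp [ha, hb, hUW ha, hN a ha b hab]
    · simp [ha, hb, hUW hb, hN b hb a hab.symm]
    · simp [ha, hb]

section Counting

variable [Fintype V] [DecidableRel G.Adj]

lemma sum_degree_sub_two_add (hdeg : ∀ u, 2 ≤ G.degree u) (U : Finset V) :
    ∑ u ∈ U, (G.degree u - 2) + 2 * #U = ∑ u ∈ U, G.degree u := by
  rw [mul_comm, ← smul_eq_mul, ← sum_const, ← sum_add_distrib]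
  exact sum_congr rfl fun u _ => Nat.sub_add_cancel (hdeg u)

variable [DecidableEq V]

lemma card_edgeFinset_induce_eq (S : Finset V) :
    #(G.induce (S : Set V)).edgeFinset = #{e ∈ G.edgeFinset | e ∈ S.sym2} := by
  have := congrArg card (map_edgeFinset_induce (G := G) (s := (S : Set V)))
  rw [card_map] at this
  convert this using 2 <;> ext <;> simp

lemma sum_degree_le_card_edgeFinset_induce_add {U W : Finset V} (hUW : U ⊆ W)
    (hN : ∀ u ∈ U, ∀ w, G.Adj u w → w ∈ W) :
    ∑ u ∈ U, G.degree u ≤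
      #(G.induce (U : Set V)).edgeFinset + #(G.induce (W : Set V)).edgeFinset := by
  calc ∑ u ∈ U, G.degree u
      = ∑ e ∈ G.edgeFinset, #{u ∈ U | u ∈ e} := by
        simp_rw [← card_incidenceFinset_eq_degree, incidenceFinset_eq_filter]
        exact sum_card_bipartiteAbove_eq_sum_card_bipartiteBelow _
    _ ≤ ∑ e ∈ G.edgeFinset, ((if e ∈ U.sym2 then 1 else 0) + (if e ∈ W.sym2 then 1 else 0)) :=
        sum_le_sum fun e he => card_filter_mem_le_of_mem_edgeSet hUW hN (mem_edgeFinset.mp he)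
    _ = _ := by rw [sum_add_distrib, card_edgeFinset_induce_eq, card_edgeFinset_induce_eq,
        card_filter, card_filter]

end Counting

section closedBall

variable [Fintype V]

-- `G.dist` is `0` between different components, so this is the usual ball only in connected graphs.
variable (G) in
open Classical in
noncomputable def closedBall (v : V) (r : ℕ) : Finset V := {u | G.dist v u ≤ r}

lemma mem_closedBall {r : ℕ} : u ∈ G.closedBall v r ↔ G.dist v u ≤ r := by
  simp [closedBall]

lemma closedBall_mono {r r' : ℕ} (h : r ≤ r') : G.closedBall v r ⊆ G.closedBall v r' :=
  fun _ hu => mem_closedBall.mpr ((mem_closedBall.mp hu).trans h)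

lemma center_mem_closedBall {r : ℕ} : v ∈ G.closedBall v r := by
  simp [mem_closedBall]

lemma exists_walk_induce_closedBall {r : ℕ} (hG : G.Connected) (hu : u ∈ G.closedBall v r) :
    ∃ p : (G.induce (G.closedBall v r : Set V)).Walk ⟨v, center_mem_closedBall⟩ ⟨u, hu⟩,
      p.length ≤ r := by
  obtain ⟨p, hp⟩ := hG.exists_walk_length_eq_dist v u
  have hsupp : ∀ x ∈ p.support, x ∈ (G.closedBall v r : Set V) := fun x hx =>
    mem_closedBall.mpr ((p.dist_le_of_mem_support_of_length_eq_dist hp hx).trans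
      (mem_closedBall.mp hu))
  refine ⟨p.induce _ hsupp, ?_⟩
  have := congrArg Walk.length (p.map_induce hsupp)
  rw [Walk.length_map] at this
  exact this.trans_le (hp.trans_le (mem_closedBall.mp hu))

lemma sum_sum_closedBall (f : V → ℕ) (r : ℕ) :
    ∑ v, ∑ u ∈ G.closedBall v r, f u = ∑ u, #(G.closedBall u r) * f u := by
  simp only [closedBall, sum_filter, card_filter, sum_mul, ite_mul, one_mul, zero_mul]
  rw [sum_comm]
  simp only [dist_comm]

variable [DecidableRel G.Adj]

lemma card_edgeFinset_induce_closedBall_add_one {r : ℕ} (hG : G.Connected)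
    (hg : ((2 * r + 2 : ℕ) : ℕ∞) < G.egirth) :
    #(G.induce (G.closedBall v r : Set V)).edgeFinset + 1 = #(G.closedBall v r) := by
  set H := G.induce (G.closedBall v r : Set V)
  have hwalk (u : G.closedBall v r) : ∃ p : H.Walk ⟨v, center_mem_closedBall⟩ u, p.length ≤ r :=
    exists_walk_induce_closedBall hG u.2
  have hH : H.Connected := by
    refine (connected_iff _).mpr ⟨fun a b => ?_, ⟨_, center_mem_closedBall⟩⟩
    obtain ⟨pa, -⟩ := hwalk a
    obtain ⟨pb, -⟩ := hwalk b
    exact (pa.reverse.append pb).reachable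
  have hHg : ((2 * r + 2 : ℕ) : ℕ∞) < H.egirth :=
    hg.trans_le (Embedding.induce _).isContained.egirth_le
  have hacyc := hH.isAcyclic_of_forall_dist_le (fun u => by
    obtain ⟨p, hp⟩ := hwalk u
    exact (H.dist_le p).trans hp) hHg
  rw [IsTree.card_edgeFinset ⟨hH, hacyc⟩]
  simp

variable [DecidableEq V]

lemma sum_degree_closedBall_add_two_le {ρ : ℕ} (hG : G.Connected)
    (hg : ((2 * (ρ + 1) + 2 : ℕ) : ℕ∞) < G.egirth) :
    ∑ u ∈ G.closedBall v ρ, G.degree u + 2 ≤ #(G.closedBall v ρ) + #(G.closedBall v (ρ + 1)) := by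
  have hU := card_edgeFinset_induce_closedBall_add_one (v := v) (r := ρ) hG
    (hg.trans_le' (Nat.cast_le.mpr (by omega)))
  have hW := card_edgeFinset_induce_closedBall_add_one (v := v) hG hg
  have hsum := sum_degree_le_card_edgeFinset_induce_add (G := G)
    (closedBall_mono (G := G) (v := v) (Nat.le_add_right ρ 1)) fun u hu w huw => by
      have := mem_closedBall.mp hu
      have := huw.diff_dist_adj (u := v)
      exact mem_closedBall.mpr (by omega)
  omega

lemma card_closedBall_add_mul_le (hG : G.Connected) (hdeg : ∀ u, 2 ≤ G.degree u) {t l : ℕ}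
    (hg : ((2 * (t + l) + 2 : ℕ) : ℕ∞) < G.egirth) :
    #(G.closedBall v t) + l * (∑ u ∈ G.closedBall v t, (G.degree u - 2) + 2) ≤
      #(G.closedBall v (t + l)) := by
  induction l with
  | zero => simp
  | succ l ih =>
    have hih := ih (hg.trans_le' (Nat.cast_le.mpr (by omega)))
    have hgrow := sum_degree_closedBall_add_two_le (v := v) (ρ := t + l) hG hg
    have hsub := sum_le_sum_of_subset (f := fun u => G.degree u - 2)
      (closedBall_mono (G := G) (v := v) (Nat.le_add_right t l))
    rw [← sum_degree_sub_two_add hdeg] at hgrow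
    rw [← add_assoc, add_one_mul]
    omega

lemma two_mul_add_one_le_card_closedBall (hG : G.Connected) (hdeg : ∀ u, 2 ≤ G.degree u)
    {t : ℕ} (hg : ((2 * t + 2 : ℕ) : ℕ∞) < G.egirth) : 2 * t + 1 ≤ #(G.closedBall v t) := by
  have hgrow := card_closedBall_add_mul_le (v := v) (t := 0) (l := t) hG hdeg
    (hg.trans_le' (Nat.cast_le.mpr (by omega)))
  rw [zero_add, mul_add] at hgrow
  have := card_pos.mpr ⟨v, center_mem_closedBall (G := G) (r := 0)⟩
  omega

lemma mul_sum_closedBall_degree_sub_two_le (hG : G.Connected) (hdeg : ∀ u, 2 ≤ G.degree u)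
    {t : ℕ} (hg : ((4 * t + 4 : ℕ) : ℕ∞) < G.egirth) :
    (t + 1) * ∑ u ∈ G.closedBall v t, (G.degree u - 2) ≤ Fintype.card V := by
  have hgrow := card_closedBall_add_mul_le (v := v) (t := t) (l := t + 1) hG hdeg
    (hg.trans_le' (Nat.cast_le.mpr (by omega)))
  have := card_le_univ (G.closedBall v (t + (t + 1)))
  rw [mul_add] at hgrow
  omega

theorem mul_sum_degree_sub_two_le (hG : G.Connected) (hdeg : ∀ u, 2 ≤ G.degree u) {t : ℕ}
    (hg : ((4 * t + 4 : ℕ) : ℕ∞) < G.egirth) :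
    (t + 1) * (2 * t + 1) * ∑ u, (G.degree u - 2) ≤ Fintype.card V ^ 2 := by
  calc (t + 1) * (2 * t + 1) * ∑ u, (G.degree u - 2)
      = (t + 1) * ∑ u, (2 * t + 1) * (G.degree u - 2) := by rw [mul_assoc, mul_sum]
    _ ≤ (t + 1) * ∑ u, #(G.closedBall u t) * (G.degree u - 2) := by
        gcongr with u
        exact two_mul_add_one_le_card_closedBall hG hdeg
          (hg.trans_le' (Nat.cast_le.mpr (by omega)))
    _ = ∑ v, (t + 1) * ∑ u ∈ G.closedBall v t, (G.degree u - 2) := by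
        rw [← sum_sum_closedBall, mul_sum]
    _ ≤ ∑ _v : V, Fintype.card V :=
        sum_le_sum fun _ _ => mul_sum_closedBall_degree_sub_two_le hG hdeg hg
    _ = Fintype.card V ^ 2 := by simp [sq]

end closedBall

theorem card_edgeFinset_sub_card_add_one_le_of_two_le_degree [Fintype V] [DecidableRel G.Adj]
    (hG : G.Connected) (hdeg : ∀ u, 2 ≤ G.degree u) {s : ℕ} (hs : 2 < s)
    (hg : ((2 * s : ℕ) : ℕ∞) < G.egirth) :
    (#G.edgeFinset : ℝ) - Fintype.card V + 1 ≤ Fintype.card V ^ 2 / ((s : ℝ) / 2 - 1) ^ 2 := by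
  classical
  -- The largest `t` with `4t + 4 ≤ 2s`, so that balls of radius `2t + 1` induce trees.
  set t := s / 2 - 1
  have hcore := mul_sum_degree_sub_two_le hG hdeg (t := t)
    (hg.trans_le' (Nat.cast_le.mpr (by omega)))
  have hsum := sum_degree_sub_two_add hdeg univ
  rw [sum_degrees_eq_twice_card_edges, card_univ] at hsum
  obtain ⟨v⟩ := hG.nonempty
  have hn : 2 * t + 1 ≤ Fintype.card V :=
    (two_mul_add_one_le_card_closedBall (v := v) hG hdeg
      (hg.trans_le' (Nat.cast_le.mpr (by omega)))).trans (card_le_univ _)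
  have hsR : (s : ℝ) ≤ 2 * t + 3 := by exact_mod_cast (show s ≤ 2 * t + 3 by omega)
  have h2 : (2 : ℝ) < s := by exact_mod_cast hs
  have hexcess :
      2 * ((#G.edgeFinset : ℝ) - Fintype.card V) = (∑ u, (G.degree u - 2) : ℕ) := by
    have := congrArg (Nat.cast (R := ℝ)) hsum
    push_cast at this ⊢
    linarith
  have hpos : (0 : ℝ) ≤ (∑ u, (G.degree u - 2) : ℕ) := Nat.cast_nonneg _
  apply add_one_le_div_sq_of_mul_le (t := t) (by linarith) (by linarith) (by linarith)
    (by exact_mod_cast hn)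
  rw [hexcess]
  exact_mod_cast hcore

lemma card_edgeFinset_induce_compl_singleton_add_one [Fintype V] [DecidableEq V]
    [DecidableRel G.Adj] (hv : G.degree v = 1) :
    #(G.induce {v}ᶜ).edgeFinset + 1 = #G.edgeFinset := by
  have := G.degree_le_card_edgeFinset v
  rw [card_edgeFinset_induce_compl_singleton, card_edgeFinset_deleteIncidenceSet]
  omega

theorem card_edgeFinset_sub_card_add_one_le [Fintype V] [DecidableRel G.Adj]
    (hG : G.Connected) {s : ℕ} (hs : 2 < s) (hg : ((2 * s : ℕ) : ℕ∞) < G.egirth) :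
    (#G.edgeFinset : ℝ) - Fintype.card V + 1 ≤ Fintype.card V ^ 2 / ((s : ℝ) / 2 - 1) ^ 2 := by
  classical
  induction hn : Fintype.card V using Nat.strong_induction_on generalizing V with
  | _ n ih =>
  subst hn
  rcases subsingleton_or_nontrivial V with hV | hV
  · have h1 : Fintype.card V = 1 := le_antisymm
      (Fintype.card_le_one_iff_subsingleton.mpr hV) (Fintype.card_pos_iff.mpr hG.nonempty)
    have hm : #G.edgeFinset = 0 := by simpa [h1] using G.card_edgeFinset_le_card_choose_two
    simp only [hm, h1]
    norm_num
    positivity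
  by_cases hdeg : ∀ u, 2 ≤ G.degree u
  · exact card_edgeFinset_sub_card_add_one_le_of_two_le_degree hG hdeg hs hg
  obtain ⟨v, hv⟩ := not_forall.mp hdeg
  have hv1 : G.degree v = 1 := by
    have := hG.preconnected.degree_pos_of_nontrivial v
    omega
  have hcard : Fintype.card ({v}ᶜ : Set V) + 1 = Fintype.card V := by
    have := Fintype.card_pos (α := V)
    simp only [Fintype.card_compl_set, Set.card_singleton]
    omega
  have hrec := ih _ (by omega) (G := G.induce {v}ᶜ)
    (hG.induce_compl_singleton_of_degree_eq_one hv1)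
    (hg.trans_le (Embedding.induce _).isContained.egirth_le) rfl
  have hedge : (#(G.induce {v}ᶜ).edgeFinset : ℝ) + 1 = #G.edgeFinset := by
    exact_mod_cast card_edgeFinset_induce_compl_singleton_add_one hv1
  have hcardR : (Fintype.card ({v}ᶜ : Set V) : ℝ) + 1 = Fintype.card V := by exact_mod_cast hcard
  calc (#G.edgeFinset : ℝ) - Fintype.card V + 1
      = #(G.induce {v}ᶜ).edgeFinset - Fintype.card ({v}ᶜ : Set V) + 1 := by linarith
    _ ≤ Fintype.card ({v}ᶜ : Set V) ^ 2 / ((s : ℝ) / 2 - 1) ^ 2 := hrec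
    _ ≤ Fintype.card V ^ 2 / ((s : ℝ) / 2 - 1) ^ 2 := by gcongr; linarith

end SimpleGraph

/-- If a finite connected graph (the induced subgraph `G_A` on a vertex set `A`)
has girth greater than `2s` with `s ≥ 4`, then its tree excess
`|E_A| - |A| + 1` is at most `|A|² / (s/2 - 1)²`. -/
theorem stmt_2 {A : Type} [Fintype A] (G : SimpleGraph A) (s : ℕ) (hs : 4 ≤ s)
    (hconn : G.Connected) (hgirth : (2 * s : ℕ∞) < G.girth) :
    (Nat.card G.edgeSet : ℝ) - (Fintype.card A : ℝ) + 1
      ≤ (Fintype.card A : ℝ) ^ 2 / ((s : ℝ) / 2 - 1) ^ 2 := by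
  classical
  have hg : ((2 * s : ℕ) : ℕ∞) < G.egirth := by
    push_cast
    exact hgirth.trans_le G.egirth.natCast_toNat_le_self
  rw [Nat.card_eq_fintype_card, ← edgeFinset_card]
  exact card_edgeFinset_sub_card_add_one_le hconn (by omega) hg
end

section
/- Let G be a finite d-regular graph on n vertices (d ≥ 3) such that every ball of radius s contains at most one cycle, and let A be a connected set of vertices with |A| ≤ κ·s for some κ ≥ 1, where s is the cycle-radius parameter. Then the number of distinct short cycles (cycles of length at most 2s) contained in the induced subgraph on A is at most κ. -/
/-!
For a short cycle `C ⊆ A` consider the set of its centres `O_C = {y ∈ A : C ⊆ B(y, s)}`.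
Since a ball of radius `s` contains at most one cycle, the sets `O_C` of distinct short cycles are
disjoint. A cycle on `m ≤ 2s` vertices has diameter at most `m / 2`, so `O_C` contains the
`(s - m / 2)`-neighbourhood of `C` in `G_A`; as `G_A` is connected, that neighbourhood has at least
`min (m + (s - m / 2)) |A| ≥ min s |A|` vertices. Summing over the short cycles gives
`#cycles · min s |A| ≤ |A| ≤ κ s`, whence `#cycles ≤ κ`.
-/

open SimpleGraph

/-- The ball of radius `r` around `x` in the graph distance of `G`. -/
def gBall {V : Type} (G : SimpleGraph V) (x : V) (r : ℕ) : Set V :=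
  {y | G.dist x y ≤ r}

/-- A set of vertices `C` is a cycle (as a subgraph) if it is finite, nonempty,
induces a connected subgraph, and every vertex of `C` has exactly two
neighbours inside `C`. -/
def IsCycleSet {V : Type} (G : SimpleGraph V) (C : Set V) : Prop :=
  C.Finite ∧ C.Nonempty ∧ (G.induce C).Connected ∧
    ∀ v ∈ C, Nat.card {w : V // w ∈ C ∧ G.Adj v w} = 2

open Set
open scoped Function

theorem Set.card_mul_le_ncard_of_pairwise_disjoint {ι α : Type*} [Finite ι] {A : Set α}
    (hA : A.Finite) {O : ι → Set α} (hOA : ∀ i, O i ⊆ A) (hO : Pairwise (Disjoint on O))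
    {k : ℕ} (hk : ∀ i, k ≤ (O i).ncard) : Nat.card ι * k ≤ A.ncard := by
  have := Fintype.ofFinite ι
  calc Nat.card ι * k = ∑ _i : ι, k := by simp [mul_comm]
    _ ≤ ∑ i, (O i).ncard := Finset.sum_le_sum fun i _ ↦ hk i
    _ = (⋃ i, O i).ncard := by
      rw [ncard_iUnion_of_finite (fun i ↦ hA.subset (hOA i)) hO, finsum_eq_sum_of_fintype]
    _ ≤ A.ncard := ncard_le_ncard (iUnion_subset hOA) hA

namespace SimpleGraph

variable {V : Type*} {G : SimpleGraph V}

theorem Walk.two_mul_dist_le_length {v a b : V} (c : G.Walk v v) (ha : a ∈ c.support)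
    (hb : b ∈ c.support) : 2 * G.dist a b ≤ c.length := by
  classical
  set q := c.rotate a ha
  have hbq : b ∈ q.support := (c.mem_support_rotate_iff a ha).mpr hb
  have hsplit := congrArg Walk.length (q.take_spec hbq)
  rw [Walk.length_append, c.length_rotate] at hsplit
  have h₁ := dist_le (q.takeUntil b hbq)
  have h₂ : G.dist a b ≤ (q.dropUntil b hbq).length := by
    simpa [dist_comm] using dist_le (q.dropUntil b hbq).reverse
  omega

theorem Walk.IsCycle.length_le_card [Finite V] {v : V} {c : G.Walk v v} (hc : c.IsCycle) :
    c.length ≤ Nat.card V := by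
  have := Fintype.ofFinite V
  have hlen : c.support.tail.length = c.length := by simp [List.length_tail, Walk.length_support]
  rw [← hlen, Nat.card_eq_fintype_card]
  exact hc.support_nodup.length_le_card

theorem Reachable.dist_map_le {W : Type*} {H : SimpleGraph W} (f : G →g H) {u v : V}
    (h : G.Reachable u v) : H.dist (f u) (f v) ≤ G.dist u v := by
  obtain ⟨p, hp⟩ := h.exists_walk_length_eq_dist
  simpa [hp] using dist_le (p.map f)

theorem Connected.exists_adj_of_ne_univ (hG : G.Connected) {S : Set V} (hS : S.Nonempty)
    (hSu : S ≠ univ) : ∃ a ∈ S, ∃ b ∉ S, G.Adj a b := by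
  obtain ⟨a, ha⟩ := hS
  obtain ⟨b, hb⟩ := ne_univ_iff_exists_notMem S |>.mp hSu
  obtain ⟨p⟩ := hG.preconnected a b
  obtain ⟨d, -, hd₁, hd₂⟩ := p.exists_boundary_dart S ha hb
  exact ⟨_, hd₁, _, hd₂, d.adj⟩

-- Since `G.dist` is `0` between unreachable vertices, this is the `r`-neighbourhood only when
-- `G` is connected.
def cthickening (G : SimpleGraph V) (S : Set V) (r : ℕ) : Set V :=
  {y | ∃ c ∈ S, G.dist c y ≤ r}

theorem self_subset_cthickening (S : Set V) (r : ℕ) : S ⊆ G.cthickening S r :=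
  fun c hc ↦ ⟨c, hc, by simp⟩

theorem cthickening_mono (S : Set V) {r r' : ℕ} (h : r ≤ r') :
    G.cthickening S r ⊆ G.cthickening S r' :=
  fun _ ⟨c, hc, hcy⟩ ↦ ⟨c, hc, hcy.trans h⟩

theorem Connected.min_ncard_add_le_ncard_cthickening [Finite V] (hG : G.Connected) {S : Set V}
    (hS : S.Nonempty) (r : ℕ) : min (S.ncard + r) (Nat.card V) ≤ (G.cthickening S r).ncard := by
  induction r with
  | zero =>
    have := ncard_le_ncard (G.self_subset_cthickening S 0)
    omega
  | succ r ih =>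
    have hmono := G.cthickening_mono S (Nat.le_add_right r 1)
    by_cases huniv : G.cthickening S r = univ
    · have := ncard_le_ncard hmono
      rw [huniv, ncard_univ] at this
      omega
    obtain ⟨a, ⟨c, hc, hca⟩, b, hb, hab⟩ :=
      hG.exists_adj_of_ne_univ (hS.mono (G.self_subset_cthickening S r)) huniv
    have hb' : b ∈ G.cthickening S (r + 1) := by
      refine ⟨c, hc, ?_⟩
      have := hab.reachable.dist_triangle_right c
      rw [dist_eq_one_iff_adj.mpr hab] at this
      omega
    have := ncard_le_ncard (insert_subset hb' hmono)
    rw [ncard_insert_of_notMem hb] at this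
    omega

end SimpleGraph
section CycleSets

variable {V : Type} {G : SimpleGraph V}

theorem IsCycleSet.ncard_neighborSet_induce {C : Set V} (hC : IsCycleSet G C) (v : C) :
    ((G.induce C).neighborSet v).ncard = 2 := by
  rw [← Nat.card_coe_set_eq, ← hC.2.2.2 v v.2]
  exact Nat.card_congr
    { toFun := fun w ↦ ⟨w.1.1, w.1.2, w.2⟩
      invFun := fun w ↦ ⟨⟨w.1, w.2.1⟩, w.2.2⟩ }

theorem IsCycleSet.two_mul_dist_le {C : Set V} (hC : IsCycleSet G C) {a b : V} (ha : a ∈ C)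
    (hb : b ∈ C) : 2 * G.dist a b ≤ Nat.card C := by
  have : Finite C := hC.1.to_subtype
  have hconn := hC.2.2.1
  have hnbr : ((G.induce C).neighborSet ⟨a, ha⟩).Nonempty :=
    nonempty_of_ncard_ne_zero (by rw [hC.ncard_neighborSet_induce]; omega)
  obtain ⟨p, hp, hverts⟩ := IsCycles.exists_cycle_toSubgraph_verts_eq_connectedComponentSupp
    (fun v _ ↦ hC.ncard_neighborSet_induce v) rfl hnbr
  have hsupp (x : C) : x ∈ p.support := by
    rw [← Walk.mem_verts_toSubgraph, hverts, ConnectedComponent.mem_supp_iff,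
      ConnectedComponent.eq]
    exact hconn.preconnected x _
  calc 2 * G.dist a b ≤ 2 * (G.induce C).dist ⟨a, ha⟩ ⟨b, hb⟩ := by
        gcongr
        exact (hconn.preconnected ⟨a, ha⟩ ⟨b, hb⟩).dist_map_le (Embedding.induce C).toHom
    _ ≤ p.length := p.two_mul_dist_le_length (hsupp _) (hsupp _)
    _ ≤ Nat.card C := hp.length_le_card

theorem IsCycleSet.min_le_ncard_centers [Finite V] {A C : Set V} {s : ℕ}
    (hA : (G.induce A).Connected) (hCA : C ⊆ A) (hC : IsCycleSet G C)
    (hCs : Nat.card C ≤ 2 * s) : min s (Nat.card A) ≤ {y ∈ A | C ⊆ gBall G y s}.ncard := by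
  set m := Nat.card C
  set S : Set A := Subtype.val ⁻¹' C
  have hSm : S.ncard = m := by
    rw [ncard_preimage_of_injective_subset_range Subtype.val_injective (by simpa using hCA),
      ← Nat.card_coe_set_eq]
  have hS : S.Nonempty := by
    obtain ⟨c, hc⟩ := hC.2.1
    exact ⟨⟨c, hCA hc⟩, hc⟩
  have hcentres : Subtype.val '' (G.induce A).cthickening S (s - m / 2) ⊆
      {y ∈ A | C ⊆ gBall G y s} := by
    rintro _ ⟨y, ⟨c, hc, hcy⟩, rfl⟩
    refine ⟨y.2, fun c' hc' ↦ ?_⟩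
    have hreach : G.Reachable y c := (hA.preconnected y c).map (Embedding.induce A).toHom
    have h₁ : G.dist y c ≤ (G.induce A).dist c y := by
      rw [SimpleGraph.dist_comm]
      exact (hA.preconnected c y).dist_map_le (Embedding.induce A).toHom
    have h₂ := hC.two_mul_dist_le hc hc'
    have h₃ := hreach.dist_triangle_left c'
    show G.dist y c' ≤ s
    omega
  calc min s (Nat.card A) ≤ min (S.ncard + (s - m / 2)) (Nat.card A) := by omega
    _ ≤ ((G.induce A).cthickening S (s - m / 2)).ncard :=
      hA.min_ncard_add_le_ncard_cthickening hS _
    _ = (Subtype.val '' (G.induce A).cthickening S (s - m / 2)).ncard :=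
      (ncard_image_of_injective _ Subtype.val_injective).symm
    _ ≤ _ := ncard_le_ncard hcentres

theorem IsCycleSet.disjoint_centers {s : ℕ}
    (hball : ∀ x : V, {C : Set V | C ⊆ gBall G x s ∧ IsCycleSet G C}.Subsingleton)
    {C C' : Set V} (hC : IsCycleSet G C) (hC' : IsCycleSet G C') (hne : C ≠ C') :
    Disjoint {y | C ⊆ gBall G y s} {y | C' ⊆ gBall G y s} :=
  disjoint_left.mpr fun y hy hy' ↦ hne (hball y ⟨hy, hC⟩ ⟨hy', hC'⟩)

end CycleSets

theorem stmt_3_general {V : Type} [Fintype V] (G : SimpleGraph V) (s κ : ℕ)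
    (hball : ∀ x : V, {C : Set V | C ⊆ gBall G x s ∧ IsCycleSet G C}.Subsingleton)
    (A : Set V) (hAconn : (G.induce A).Connected) (hAcard : Nat.card ↥A ≤ κ * s) :
    Nat.card {C : Set V // C ⊆ A ∧ IsCycleSet G C ∧ Nat.card ↥C ≤ 2 * s} ≤ κ := by
  set T := {C : Set V // C ⊆ A ∧ IsCycleSet G C ∧ Nat.card C ≤ 2 * s}
  have : Nonempty A := hAconn.nonempty
  have hA : 0 < Nat.card A := Nat.card_pos
  have hcount : Nat.card T * min s (Nat.card A) ≤ Nat.card A := by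
    rw [Nat.card_coe_set_eq]
    refine card_mul_le_ncard_of_pairwise_disjoint (toFinite A)
      (O := fun C : T ↦ {y ∈ A | C.1 ⊆ gBall G y s}) (fun _ ↦ sep_subset _ _)
      (fun C C' hne ↦ ?_) (fun C ↦ C.2.2.1.min_le_ncard_centers hAconn C.2.1 C.2.2.2)
    exact (C.2.2.1.disjoint_centers hball C'.2.2.1 (Subtype.coe_ne_coe.mpr hne)).mono
      (fun _ hy ↦ hy.2) (fun _ hy ↦ hy.2)
  obtain ⟨hκ, hs⟩ := CanonicallyOrderedAdd.mul_pos.mp (hA.trans_le hAcard)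
  rcases le_total s (Nat.card A) with hsA | hAs
  · rw [min_eq_left hsA] at hcount
    exact Nat.le_of_mul_le_mul_right (hcount.trans hAcard) hs
  · rw [min_eq_right hAs] at hcount
    have : Nat.card T ≤ 1 := Nat.le_of_mul_le_mul_right (by omega) hA
    omega

/-- In a finite `d`-regular graph (`d ≥ 3`) in which every ball of radius `s`
contains at most one cycle, any connected vertex set `A` with `|A| ≤ κ·s`
contains at most `κ` distinct short cycles (cycles with at most `2s` edges). -/
theorem stmt_3 {V : Type} [Fintype V] (G : SimpleGraph V) (d s κ : ℕ)
    (hd : 3 ≤ d) (hs : 0 < s) (hκ : 1 ≤ κ)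
    (hreg : ∀ v : V, Nat.card (G.neighborSet v) = d)
    (hball : ∀ x : V, {C : Set V | C ⊆ gBall G x s ∧ IsCycleSet G C}.Subsingleton)
    (A : Set V) (hAconn : (G.induce A).Connected) (hAcard : Nat.card ↥A ≤ κ * s) :
    Nat.card {C : Set V // C ⊆ A ∧ IsCycleSet G C ∧ Nat.card ↥C ≤ 2 * s} ≤ κ :=
  stmt_3_general G s κ hball A hAconn hAcard
end

section
/- Let G be a finite connected graph, A and C disjoint nonempty vertex subsets, g* the equilibrium potential g*(x) = P_x[H_A ≤ H_C], and f*(x) = 1 - E_x[H_A]/E_π[H_A]. Then D(g*, g*)·(1 - 2·sup_{x∈C} |f*(x)|) ≤ 1/E_π[H_A] ≤ D(g*, g*)·π(C)^{-2}. -/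
/-!
Write `L = I - P` and `f* = 1 - h / M` with `M = E_π[H_A]`. Then `f* = 1` on `A` and
`L f* = -1/M` off `A`, so Green's formula and stationarity give `D(f*, v) = (1 - Σ π v) / M` for
every `v` equal to `1` on `A`; in particular `D(f*, f*) = 1/M` because `Σ π f* = 0`. By the
minimum principle `0 ≤ g* ≤ 1`, so `π(C)/M ≤ D(g*, f*) ≤ 1/M`. The upper bound is then
Cauchy–Schwarz `D(g*, f*)² ≤ D(g*, g*) D(f*, f*)`. For the lower bound,
`D(g*, f*) = D(g*, g*) + Σ_C π f* L g*`, and `-Σ_C π L g* = D(g*, g*)` is the (nonnegative) flux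
of `g*` into `C`, so the error term is at least `-sup_C |f*| · D(g*, g*)`.
-/

open Finset SimpleGraph

namespace MarkovChain

variable {V : Type*} [Fintype V]

noncomputable def laplacian (p : V → V → ℝ) (u : V → ℝ) (x : V) : ℝ :=
  u x - ∑ y, p x y * u y

noncomputable def dirichletForm (π : V → ℝ) (p : V → V → ℝ) (u v : V → ℝ) : ℝ :=
  1 / 2 * ∑ x, ∑ y, (u x - u y) * (v x - v y) * π x * p x y

variable {π : V → ℝ} {p : V → V → ℝ}

lemma laplacian_neg (u : V → ℝ) (x : V) : laplacian p (-u) x = -laplacian p u x := by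
  simp only [laplacian, Pi.neg_apply, mul_neg, sum_neg_distrib]
  ring

lemma laplacian_eq_sum_mul_sub (hrow : ∀ x, ∑ y, p x y = 1) (u : V → ℝ) (x : V) :
    laplacian p u x = ∑ y, p x y * (u x - u y) := by
  simp only [laplacian, mul_sub, sum_sub_distrib, ← sum_mul, hrow, one_mul]

lemma dirichletForm_comm (u v : V → ℝ) : dirichletForm π p u v = dirichletForm π p v u := by
  simp only [dirichletForm, mul_comm (u _ - u _)]

lemma dirichletForm_self_nonneg (hw : ∀ x y, 0 ≤ π x * p x y) (u : V → ℝ) :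
    0 ≤ dirichletForm π p u u := by
  unfold dirichletForm
  refine mul_nonneg (by norm_num) (sum_nonneg fun x _ => sum_nonneg fun y _ => ?_)
  rw [mul_assoc]
  exact mul_nonneg (mul_self_nonneg _) (hw x y)

lemma dirichletForm_sq_le (hw : ∀ x y, 0 ≤ π x * p x y) (u v : V → ℝ) :
    dirichletForm π p u v ^ 2 ≤ dirichletForm π p u u * dirichletForm π p v v := by
  have hcs := sum_sq_le_sum_mul_sum_of_sq_le_mul (univ : Finset (V × V))
    (r := fun i => (u i.1 - u i.2) * (v i.1 - v i.2) * π i.1 * p i.1 i.2)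
    (f := fun i => (u i.1 - u i.2) * (u i.1 - u i.2) * π i.1 * p i.1 i.2)
    (g := fun i => (v i.1 - v i.2) * (v i.1 - v i.2) * π i.1 * p i.1 i.2)
    (fun i _ => by rw [mul_assoc]; exact mul_nonneg (mul_self_nonneg _) (hw _ _))
    (fun i _ => by rw [mul_assoc]; exact mul_nonneg (mul_self_nonneg _) (hw _ _))
    (fun i _ => le_of_eq (by ring))
  simp only [← univ_product_univ, sum_product] at hcs
  unfold dirichletForm
  nlinarith

lemma dirichletForm_const_right (u : V → ℝ) (c : ℝ) : dirichletForm π p u (fun _ => c) = 0 := by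
  simp [dirichletForm]

section Kernel

variable (hp0 : ∀ x y, 0 ≤ p x y) (hrow : ∀ x, ∑ y, p x y = 1)
include hp0 hrow

lemma laplacian_nonpos_of_forall_le {u : V → ℝ} {x : V} (hmin : ∀ y, u x ≤ u y) :
    laplacian p u x ≤ 0 := by
  rw [laplacian_eq_sum_mul_sub hrow]
  exact sum_nonpos fun y _ => mul_nonpos_of_nonneg_of_nonpos (hp0 x y) (sub_nonpos.2 (hmin y))

lemma eq_of_adj_of_forall_le {G : SimpleGraph V} (hpos : ∀ x y, G.Adj x y → 0 < p x y)
    {u : V → ℝ} {x y : V} (hmin : ∀ y, u x ≤ u y) (hx : laplacian p u x = 0) (hxy : G.Adj x y) :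
    u y = u x := by
  rw [laplacian_eq_sum_mul_sub hrow] at hx
  have hterm := (sum_eq_zero_iff_of_nonpos fun z _ =>
    mul_nonpos_of_nonneg_of_nonpos (hp0 x z) (sub_nonpos.2 (hmin z))).1 hx y (mem_univ y)
  rcases mul_eq_zero.1 hterm with hp | hu
  · exact absurd hp (hpos x y hxy).ne'
  · linarith

theorem exists_mem_forall_le_of_laplacian_eq_zero {G : SimpleGraph V}
    (hpos : ∀ x y, G.Adj x y → 0 < p x y) (hG : G.Preconnected) {B : Finset V}
    (hB : B.Nonempty) {u : V → ℝ} (hu : ∀ x ∉ B, laplacian p u x = 0) :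
    ∃ z ∈ B, ∀ x, u z ≤ u x := by
  obtain ⟨b, hb⟩ := hB
  have : Nonempty V := ⟨b⟩
  obtain ⟨x₀, hx₀⟩ := Finite.exists_min u
  by_cases hbmin : u b = u x₀
  · exact ⟨b, hb, hbmin ▸ hx₀⟩
  obtain ⟨d, -, hd₁, hd₂⟩ := (hG x₀ b).some.exists_boundary_dart {x | u x = u x₀} rfl hbmin
  have hd₁ : u d.fst = u x₀ := hd₁
  by_cases hdB : d.fst ∈ B
  · exact ⟨d.fst, hdB, hd₁ ▸ hx₀⟩
  exact absurd ((eq_of_adj_of_forall_le hp0 hrow hpos (hd₁ ▸ hx₀) (hu _ hdB) d.adj).trans hd₁) hd₂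

lemma nonneg_of_laplacian_eq_one {A : Finset V} {h : V → ℝ} (hh0 : ∀ x ∈ A, h x = 0)
    (hh : ∀ x ∉ A, laplacian p h x = 1) (x : V) : 0 ≤ h x := by
  have : Nonempty V := ⟨x⟩
  obtain ⟨x₀, hx₀⟩ := Finite.exists_min h
  by_cases hx₀A : x₀ ∈ A
  · exact hh0 x₀ hx₀A ▸ hx₀ x
  · linarith [hh x₀ hx₀A, laplacian_nonpos_of_forall_le hp0 hrow hx₀]

lemma one_le_of_laplacian_eq_one {A : Finset V} {h : V → ℝ} (hh0 : ∀ x ∈ A, h x = 0)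
    (hh : ∀ x ∉ A, laplacian p h x = 1) {x : V} (hx : x ∉ A) : 1 ≤ h x := by
  have hsum : 0 ≤ ∑ y, p x y * h y :=
    sum_nonneg fun y _ => mul_nonneg (hp0 x y) (nonneg_of_laplacian_eq_one hp0 hrow hh0 hh y)
  linarith [hh x hx, show laplacian p h x = h x - ∑ y, p x y * h y from rfl]

lemma sum_mul_pos_of_laplacian_eq_one (hπ0 : ∀ x, 0 ≤ π x) {A C : Finset V} (hAC : Disjoint A C)
    (hπC : 0 < ∑ x ∈ C, π x) {h : V → ℝ} (hh0 : ∀ x ∈ A, h x = 0)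
    (hh : ∀ x ∉ A, laplacian p h x = 1) : 0 < ∑ x, π x * h x := hπC.trans_le <| calc
  ∑ x ∈ C, π x ≤ ∑ x ∈ C, π x * h x := sum_le_sum fun x hx => le_mul_of_one_le_right (hπ0 x)
        (one_le_of_laplacian_eq_one hp0 hrow hh0 hh (disjoint_right.1 hAC hx))
  _ ≤ ∑ x, π x * h x := sum_le_sum_of_subset_of_nonneg (subset_univ C) fun x _ _ =>
        mul_nonneg (hπ0 x) (nonneg_of_laplacian_eq_one hp0 hrow hh0 hh x)

theorem mem_Icc_of_equilibrium {G : SimpleGraph V} (hpos : ∀ x y, G.Adj x y → 0 < p x y)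
    (hG : G.Preconnected) {A C : Finset V} (hA : A.Nonempty) {g : V → ℝ}
    (hgA : ∀ x ∈ A, g x = 1) (hgC : ∀ x ∈ C, g x = 0)
    (hg : ∀ x, x ∉ A → x ∉ C → laplacian p g x = 0) (x : V) : g x ∈ Set.Icc 0 1 := by
  classical
  have hB : (A ∪ C).Nonempty := hA.mono subset_union_left
  have hbdry : ∀ z ∈ A ∪ C, g z ∈ Set.Icc 0 1 := fun z hz => by
    rcases mem_union.1 hz with hzA | hzC
    · simp [hgA z hzA]
    · simp [hgC z hzC]
  have hharm : ∀ z ∉ A ∪ C, laplacian p g z = 0 := fun z hz => by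
    rw [mem_union, not_or] at hz
    exact hg z hz.1 hz.2
  obtain ⟨z₀, hz₀, hmin⟩ := exists_mem_forall_le_of_laplacian_eq_zero hp0 hrow hpos hG hB hharm
  obtain ⟨z₁, hz₁, hmax⟩ := exists_mem_forall_le_of_laplacian_eq_zero hp0 hrow hpos hG hB
    (u := -g) fun z hz => by rw [laplacian_neg, hharm z hz, neg_zero]
  exact ⟨(hbdry z₀ hz₀).1.trans (hmin x), neg_le_neg_iff.1 (hmax x) |>.trans (hbdry z₁ hz₁).2⟩

end Kernel

lemma laplacian_one_sub_div (hrow : ∀ x, ∑ y, p x y = 1) (h : V → ℝ) (M : ℝ) (x : V) :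
    laplacian p (fun y => 1 - h y / M) x = -(laplacian p h x / M) := by
  have hsum : ∑ y, p x y * (1 - h y / M) = ∑ y, p x y - (∑ y, p x y * h y) / M := by
    rw [sum_div, ← sum_sub_distrib]
    exact sum_congr rfl fun y _ => by ring
  rw [laplacian, laplacian, hsum, hrow]
  ring

section Reversible

variable (hrev : ∀ x y, π x * p x y = π y * p y x) (hrow : ∀ x, ∑ y, p x y = 1)
include hrev hrow

lemma sum_mul_laplacian_eq_zero (u : V → ℝ) : ∑ x, π x * laplacian p u x = 0 := by
  have hstat : ∀ y, ∑ x, π x * p x y = π y := fun y => by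
    simp only [hrev _ y, ← mul_sum, hrow, mul_one]
  simp only [laplacian, mul_sub, mul_sum, sum_sub_distrib]
  rw [sum_comm]
  simp only [← mul_assoc, ← sum_mul, hstat, sub_self]

lemma dirichletForm_eq_sum_mul_laplacian (u v : V → ℝ) :
    dirichletForm π p u v = ∑ x, π x * v x * laplacian p u x := by
  have hswap : ∑ x, ∑ y, (u x - u y) * v y * (π x * p x y)
      = -∑ x, ∑ y, (u x - u y) * v x * (π x * p x y) := by
    rw [sum_comm, ← sum_neg_distrib]
    refine sum_congr rfl fun y _ => ?_
    rw [← sum_neg_distrib]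
    exact sum_congr rfl fun x _ => by rw [hrev]; ring
  have hsplit : ∑ x, ∑ y, (u x - u y) * (v x - v y) * π x * p x y
      = ∑ x, ∑ y, (u x - u y) * v x * (π x * p x y)
        - ∑ x, ∑ y, (u x - u y) * v y * (π x * p x y) := by
    simp only [← sum_sub_distrib]
    exact sum_congr rfl fun x _ => sum_congr rfl fun y _ => by ring
  rw [dirichletForm, hsplit, hswap, show ∀ a : ℝ, 1 / 2 * (a - -a) = a from fun a => by ring]
  refine sum_congr rfl fun x _ => ?_
  rw [laplacian_eq_sum_mul_sub hrow, mul_sum]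
  exact sum_congr rfl fun y _ => by ring

lemma dirichletForm_eq_of_laplacian_eq_neg_const (hπ : ∑ x, π x = 1) {A : Finset V} {c : ℝ}
    {f v : V → ℝ} (hf : ∀ x ∉ A, laplacian p f x = -c) (hv : ∀ x ∈ A, v x = 1) :
    dirichletForm π p f v = c * (1 - ∑ x, π x * v x) := by
  have hterm : ∀ x, π x * v x * laplacian p f x
      = π x * laplacian p f x + c * π x - c * (π x * v x) := fun x => by
    by_cases hx : x ∈ A
    · rw [hv x hx]; ring
    · rw [hf x hx]; ring
  rw [dirichletForm_eq_sum_mul_laplacian hrev hrow, sum_congr rfl fun x _ => hterm x,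
    sum_sub_distrib, sum_add_distrib, sum_mul_laplacian_eq_zero hrev hrow, ← mul_sum, ← mul_sum,
    hπ]
  ring

lemma dirichletForm_one_sub_div_eq (hπ : ∑ x, π x = 1) {A : Finset V} {h : V → ℝ}
    (hh : ∀ x ∉ A, laplacian p h x = 1) (M : ℝ) {v : V → ℝ} (hv : ∀ x ∈ A, v x = 1) :
    dirichletForm π p (fun x => 1 - h x / M) v = M⁻¹ * (1 - ∑ x, π x * v x) :=
  dirichletForm_eq_of_laplacian_eq_neg_const hrev hrow hπ
    (fun x hx => by rw [laplacian_one_sub_div hrow, hh x hx, one_div]) hv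

lemma dirichletForm_eq_sum_add_sum {A C : Finset V} (hAC : Disjoint A C) {g : V → ℝ}
    (hg : ∀ x, x ∉ A → x ∉ C → laplacian p g x = 0) (v : V → ℝ) :
    dirichletForm π p g v
      = ∑ x ∈ A, π x * v x * laplacian p g x + ∑ x ∈ C, π x * v x * laplacian p g x := by
  classical
  rw [dirichletForm_eq_sum_mul_laplacian hrev hrow, ← sum_union hAC]
  refine (sum_subset (subset_univ _) fun x _ hx => ?_).symm
  rw [mem_union, not_or] at hx
  rw [hg x hx.1 hx.2, mul_zero]

lemma dirichletForm_equilibrium_eq_add {A C : Finset V} (hAC : Disjoint A C) {g : V → ℝ}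
    (hgA : ∀ x ∈ A, g x = 1) (hgC : ∀ x ∈ C, g x = 0)
    (hg : ∀ x, x ∉ A → x ∉ C → laplacian p g x = 0) {v : V → ℝ} (hv : ∀ x ∈ A, v x = 1) :
    dirichletForm π p g v
      = dirichletForm π p g g + ∑ x ∈ C, π x * v x * laplacian p g x := by
  have hA : ∑ x ∈ A, π x * v x * laplacian p g x = ∑ x ∈ A, π x * g x * laplacian p g x :=
    sum_congr rfl fun x hx => by rw [hv x hx, hgA x hx]
  have hC : ∑ x ∈ C, π x * g x * laplacian p g x = 0 :=
    sum_eq_zero fun x hx => by rw [hgC x hx, mul_zero, zero_mul]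
  rw [dirichletForm_eq_sum_add_sum hrev hrow hAC hg, dirichletForm_eq_sum_add_sum hrev hrow hAC hg,
    hA, hC, add_zero]

lemma dirichletForm_equilibrium_mul_one_sub_le (hp0 : ∀ x y, 0 ≤ p x y) (hπ0 : ∀ x, 0 ≤ π x)
    {A C : Finset V} (hAC : Disjoint A C) {g : V → ℝ}
    (hgA : ∀ x ∈ A, g x = 1) (hgC : ∀ x ∈ C, g x = 0)
    (hg : ∀ x, x ∉ A → x ∉ C → laplacian p g x = 0) (hg0 : ∀ x, 0 ≤ g x)
    {v : V → ℝ} (hv : ∀ x ∈ A, v x = 1) {s : ℝ} (hs : ∀ x ∈ C, v x ≤ s) :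
    dirichletForm π p g g * (1 - s) ≤ dirichletForm π p g v := by
  have hflux : dirichletForm π p g g = -∑ x ∈ C, π x * laplacian p g x := by
    have h1 := dirichletForm_equilibrium_eq_add hrev hrow hAC hgA hgC hg (v := fun _ => 1)
      fun _ _ => rfl
    simp only [dirichletForm_const_right, mul_one] at h1
    linarith
  have hLC : ∀ x ∈ C, laplacian p g x ≤ 0 := fun x hx => by
    rw [laplacian, hgC x hx, zero_sub, neg_nonpos]
    exact sum_nonneg fun y _ => mul_nonneg (hp0 x y) (hg0 y)
  calc dirichletForm π p g g * (1 - s)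
      = dirichletForm π p g g + ∑ x ∈ C, π x * s * laplacian p g x := by
        rw [sum_congr rfl fun x _ => mul_right_comm (π x) s _, ← sum_mul, hflux]
        ring
    _ ≤ dirichletForm π p g g + ∑ x ∈ C, π x * v x * laplacian p g x := by
        refine add_le_add_right (sum_le_sum fun x hx => ?_) _
        exact mul_le_mul_of_nonpos_right (mul_le_mul_of_nonneg_left (hs x hx) (hπ0 x)) (hLC x hx)
    _ = dirichletForm π p g v := (dirichletForm_equilibrium_eq_add hrev hrow hAC hgA hgC hg hv).symm

end Reversible

lemma sum_le_one_sub_sum_mul (hπ0 : ∀ x, 0 ≤ π x) (hπ : ∑ x, π x = 1) {C : Finset V} {g : V → ℝ}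
    (hgC : ∀ x ∈ C, g x = 0) (hg1 : ∀ x, g x ≤ 1) : ∑ x ∈ C, π x ≤ 1 - ∑ x, π x * g x := by
  rw [← hπ, ← sum_sub_distrib]
  calc ∑ x ∈ C, π x = ∑ x ∈ C, (π x - π x * g x) :=
        sum_congr rfl fun x hx => by rw [hgC x hx, mul_zero, sub_zero]
    _ ≤ ∑ x, (π x - π x * g x) :=
        sum_le_sum_of_subset_of_nonneg (subset_univ C) fun x _ _ => by
          nlinarith [hπ0 x, hg1 x]

theorem dirichletForm_equilibrium_bounds (hp0 : ∀ x y, 0 ≤ p x y) (hrow : ∀ x, ∑ y, p x y = 1)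
    (hrev : ∀ x y, π x * p x y = π y * p y x) (hπ0 : ∀ x, 0 ≤ π x) (hπ : ∑ x, π x = 1)
    {A C : Finset V} (hAC : Disjoint A C) (hC : C.Nonempty) (hπC : 0 < ∑ x ∈ C, π x)
    {g : V → ℝ} (hgA : ∀ x ∈ A, g x = 1) (hgC : ∀ x ∈ C, g x = 0)
    (hg : ∀ x, x ∉ A → x ∉ C → laplacian p g x = 0) (hg0 : ∀ x, 0 ≤ g x) (hg1 : ∀ x, g x ≤ 1)
    {h : V → ℝ} (hh0 : ∀ x ∈ A, h x = 0) (hh : ∀ x ∉ A, laplacian p h x = 1) :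
    dirichletForm π p g g * (1 - 2 * C.sup' hC (fun x => |1 - h x / ∑ y, π y * h y|))
        ≤ (∑ x, π x * h x)⁻¹
      ∧ (∑ x, π x * h x)⁻¹ ≤ dirichletForm π p g g * ((∑ x ∈ C, π x) ^ 2)⁻¹ := by
  set M := ∑ x, π x * h x
  set f : V → ℝ := fun x => 1 - h x / M
  have hw : ∀ x y, 0 ≤ π x * p x y := fun x y => mul_nonneg (hπ0 x) (hp0 x y)
  have hM : 0 < M := sum_mul_pos_of_laplacian_eq_one hp0 hrow hπ0 hAC hπC hh0 hh
  have hfA : ∀ x ∈ A, f x = 1 := fun x hx => by simp [f, hh0 x hx]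
  have hDgf : dirichletForm π p g f = M⁻¹ * (1 - ∑ x, π x * g x) := by
    rw [dirichletForm_comm]
    exact dirichletForm_one_sub_div_eq hrev hrow hπ hh M hgA
  have hDff : dirichletForm π p f f = M⁻¹ := by
    have hmean : ∑ x, π x * f x = 0 := by
      simp only [f, mul_sub, mul_one, sum_sub_distrib, hπ, ← mul_div_assoc, ← sum_div]
      exact sub_eq_zero.2 (div_self hM.ne').symm
    rw [dirichletForm_one_sub_div_eq hrev hrow hπ hh M hfA, hmean, sub_zero, mul_one]
  have hE := dirichletForm_self_nonneg hw g
  have hgmean : 0 ≤ ∑ x, π x * g x := sum_nonneg fun x _ => mul_nonneg (hπ0 x) (hg0 x)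
  obtain ⟨c, hc⟩ := id hC
  have hs : ∀ x ∈ C, |f x| ≤ C.sup' hC fun x => |f x| := fun x hx => le_sup' (|f ·|) hx
  constructor
  · calc dirichletForm π p g g * (1 - 2 * C.sup' hC fun x => |f x|)
        ≤ dirichletForm π p g g * (1 - C.sup' hC fun x => |f x|) :=
          mul_le_mul_of_nonneg_left (by linarith [(abs_nonneg _).trans (hs c hc)]) hE
      _ ≤ dirichletForm π p g f := dirichletForm_equilibrium_mul_one_sub_le hrev hrow hp0 hπ0 hAC
          hgA hgC hg hg0 hfA fun x hx => (le_abs_self _).trans (hs x hx)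
      _ ≤ M⁻¹ := hDgf ▸ mul_le_of_le_one_right (inv_nonneg.2 hM.le) (by linarith)
  · have hsq : (M⁻¹ * ∑ x ∈ C, π x) ^ 2 ≤ dirichletForm π p g g * M⁻¹ := calc
      (M⁻¹ * ∑ x ∈ C, π x) ^ 2 ≤ dirichletForm π p g f ^ 2 := by
          rw [hDgf]
          gcongr
          exact sum_le_one_sub_sum_mul hπ0 hπ hgC hg1
      _ ≤ dirichletForm π p g g * dirichletForm π p f f := dirichletForm_sq_le hw g f
      _ = dirichletForm π p g g * M⁻¹ := by rw [hDff]
    rw [le_mul_inv_iff₀ (by positivity)]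
    calc M⁻¹ * (∑ x ∈ C, π x) ^ 2 = M * (M⁻¹ * ∑ x ∈ C, π x) ^ 2 := by field_simp
      _ ≤ M * (dirichletForm π p g g * M⁻¹) := by gcongr
      _ = dirichletForm π p g g := by field_simp

end MarkovChain

namespace SimpleGraph

variable {V : Type*} [Fintype V] (G : SimpleGraph V) [DecidableRel G.Adj]

noncomputable def randomWalkKernel (x y : V) : ℝ :=
  if G.Adj x y then ((G.degree x : ℝ))⁻¹ else 0

noncomputable def degreeDistribution (x : V) : ℝ :=
  (G.degree x : ℝ) / ∑ y : V, (G.degree y : ℝ)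

variable {G}

lemma randomWalkKernel_nonneg (x y : V) : 0 ≤ G.randomWalkKernel x y := by
  unfold randomWalkKernel
  split_ifs <;> positivity

lemma randomWalkKernel_pos {x y : V} (hxy : G.Adj x y) : 0 < G.randomWalkKernel x y := by
  rw [randomWalkKernel, if_pos hxy, inv_pos, Nat.cast_pos]
  exact hxy.degree_pos_left

lemma sum_randomWalkKernel {x : V} (hx : 0 < G.degree x) : ∑ y, G.randomWalkKernel x y = 1 := by
  simp only [randomWalkKernel]
  rw [← sum_filter, ← neighborFinset_eq_filter, sum_const, card_neighborFinset_eq_degree,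
    nsmul_eq_mul, mul_inv_cancel₀ (Nat.cast_pos.2 hx).ne']

lemma degreeDistribution_mul_randomWalkKernel_comm (x y : V) :
    G.degreeDistribution x * G.randomWalkKernel x y
      = G.degreeDistribution y * G.randomWalkKernel y x := by
  unfold degreeDistribution randomWalkKernel
  by_cases hxy : G.Adj x y
  · rw [if_pos hxy, if_pos hxy.symm, div_mul_eq_mul_div, div_mul_eq_mul_div,
      mul_inv_cancel₀ (Nat.cast_pos.2 hxy.degree_pos_left).ne',
      mul_inv_cancel₀ (Nat.cast_pos.2 hxy.degree_pos_right).ne']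
  · rw [if_neg hxy, if_neg fun h => hxy h.symm, mul_zero, mul_zero]

lemma degreeDistribution_nonneg (x : V) : 0 ≤ G.degreeDistribution x := by
  unfold degreeDistribution
  positivity

lemma sum_degreeDistribution [Nonempty V] (hdeg : ∀ x, 0 < G.degree x) :
    ∑ x, G.degreeDistribution x = 1 := by
  simp only [degreeDistribution]
  rw [← sum_div, div_self]
  exact (sum_pos (fun x _ => Nat.cast_pos.2 (hdeg x)) univ_nonempty).ne'

lemma degreeDistribution_pos (hdeg : ∀ x, 0 < G.degree x) (x : V) :
    0 < G.degreeDistribution x := by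
  have : Nonempty V := ⟨x⟩
  exact div_pos (Nat.cast_pos.2 (hdeg x))
    (sum_pos (fun x _ => Nat.cast_pos.2 (hdeg x)) univ_nonempty)

end SimpleGraph

open MarkovChain in
theorem stmt_5_general {V : Type} [Fintype V]
    (G : SimpleGraph V) [DecidableRel G.Adj] (hconn : G.Connected)
    (A C : Finset V) (hA : A.Nonempty) (hC : C.Nonempty) (hAC : Disjoint A C)
    (p : V → V → ℝ) (hp : ∀ x y, p x y = if G.Adj x y then ((G.degree x : ℝ))⁻¹ else 0)
    (pi : V → ℝ) (hpi : ∀ x, pi x = (G.degree x : ℝ) / ∑ y : V, (G.degree y : ℝ))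
    (D : (V → ℝ) → (V → ℝ) → ℝ)
    (hD : ∀ f g, D f g
      = (1 / 2) * ∑ x : V, ∑ y : V, (f x - f y) * (g x - g y) * pi x * p x y)
    (h : V → ℝ) (hh0 : ∀ x ∈ A, h x = 0)
    (hhrec : ∀ x, x ∉ A → h x = 1 + ∑ y : V, p x y * h y)
    (g : V → ℝ) (hgA : ∀ x ∈ A, g x = 1) (hgC : ∀ x ∈ C, g x = 0)
    (hgharm : ∀ x, x ∉ A → x ∉ C → g x = ∑ y : V, p x y * g y) :
    D g g * (1 - 2 * C.sup' hC (fun x => |1 - h x / ∑ y : V, pi y * h y|))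
        ≤ (∑ x : V, pi x * h x)⁻¹
      ∧ (∑ x : V, pi x * h x)⁻¹ ≤ D g g * ((∑ x ∈ C, pi x) ^ 2)⁻¹ := by
  obtain rfl : p = G.randomWalkKernel := funext fun x => funext (hp x)
  obtain rfl : pi = G.degreeDistribution := funext hpi
  obtain rfl : D = dirichletForm G.degreeDistribution G.randomWalkKernel :=
    funext fun u => funext (hD u)
  obtain ⟨a, ha⟩ := hA
  obtain ⟨c, hc⟩ := id hC
  have : Nontrivial V := ⟨a, c, fun hac => disjoint_left.1 hAC ha (hac ▸ hc)⟩
  have hdeg (x : V) : 0 < G.degree x := hconn.preconnected.degree_pos_of_nontrivial x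
  have hrow x := sum_randomWalkKernel (hdeg x)
  have hg x (hxA : x ∉ A) (hxC : x ∉ C) : laplacian G.randomWalkKernel g x = 0 :=
    sub_eq_zero.2 (hgharm x hxA hxC)
  have hh x (hxA : x ∉ A) : laplacian G.randomWalkKernel h x = 1 :=
    sub_eq_of_eq_add (hhrec x hxA)
  have hgI := mem_Icc_of_equilibrium randomWalkKernel_nonneg hrow
    (fun _ _ => randomWalkKernel_pos) hconn.preconnected ⟨a, ha⟩ hgA hgC hg
  exact dirichletForm_equilibrium_bounds randomWalkKernel_nonneg hrow
    degreeDistribution_mul_randomWalkKernel_comm degreeDistribution_nonneg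
    (sum_degreeDistribution hdeg) hAC hC
    (sum_pos (fun x _ => degreeDistribution_pos hdeg x) ⟨c, hc⟩) hgA hgC hg
    (fun x => (hgI x).1) (fun x => (hgI x).2) hh0 hh

/-- Two-sided bound for the reciprocal mean stationary hitting time of `A`
in terms of the Dirichlet energy of the equilibrium potential `g* = g*_{A,C}`:
`D(g*,g*)·(1 - 2 sup_{x∈C} |f*(x)|) ≤ 1/E_π[H_A] ≤ D(g*,g*)·π(C)^{-2}`,
where `f*(x) = 1 - E_x[H_A]/E_π[H_A]`.  Here `h x = E_x[H_A]` and the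
equilibrium potential `g` are characterized by their harmonic equations. -/
theorem stmt_5 {V : Type} [Fintype V] [Nonempty V] [DecidableEq V]
    (G : SimpleGraph V) [DecidableRel G.Adj] (hconn : G.Connected)
    (A C : Finset V) (hA : A.Nonempty) (hC : C.Nonempty) (hAC : Disjoint A C)
    (p : V → V → ℝ) (hp : ∀ x y, p x y = if G.Adj x y then ((G.degree x : ℝ))⁻¹ else 0)
    (pi : V → ℝ) (hpi : ∀ x, pi x = (G.degree x : ℝ) / ∑ y : V, (G.degree y : ℝ))
    (D : (V → ℝ) → (V → ℝ) → ℝ)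
    (hD : ∀ f g, D f g
      = (1 / 2) * ∑ x : V, ∑ y : V, (f x - f y) * (g x - g y) * pi x * p x y)
    (h : V → ℝ) (hh0 : ∀ x ∈ A, h x = 0)
    (hhrec : ∀ x, x ∉ A → h x = 1 + ∑ y : V, p x y * h y)
    (g : V → ℝ) (hgA : ∀ x ∈ A, g x = 1) (hgC : ∀ x ∈ C, g x = 0)
    (hgharm : ∀ x, x ∉ A → x ∉ C → g x = ∑ y : V, p x y * g y) :
    D g g * (1 - 2 * C.sup' hC (fun x => |1 - h x / ∑ y : V, pi y * h y|))
        ≤ (∑ x : V, pi x * h x)⁻¹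
      ∧ (∑ x : V, pi x * h x)⁻¹ ≤ D g g * ((∑ x ∈ C, pi x) ^ 2)⁻¹ :=
  stmt_5_general G hconn A C hA hC hAC p hp pi hpi D hD h hh0 hhrec g hgA hgC hgharm
end
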